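/- arXiv:2305.04240 — 2 statements merged into one kernel-verified Lean document; each statement's English description precedes it below -/
import Mathlib

section
/- Let a, m, ν ∈ ℂ with sin(2πa) ≠ 0. Define the 2×2 complex matrices M_A = diag(e^{2πia}, e^{−2πia}) and M_B = (1/sin 2πa) · [[ sin π(2a−m) · e^{−iν/2}, sin πm ], [ −sin πm, sin π(2a+m) · e^{iν/2} ]]. Then det M_B = 1, and the commutator M₀ := M_A^{-1} M_B^{-1} M_A M_B satisfies tr M₀ = 2 cos(2πm). -/
open Complex Real Matrix

/-- The A-cycle and B-cycle monodromy matrices on the one-punctured torus: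
det M_B = 1 and the monodromy around the puncture M₀ = M_A⁻¹M_B⁻¹M_AM_B has
trace 2cos(2πm). -/
theorem monodromy_trace (a m ν : ℂ) (ha : Complex.sin (2 * (π : ℂ) * a) ≠ 0) :
    ∀ M_A M_B : Matrix (Fin 2) (Fin 2) ℂ,
      M_A = !![Complex.exp (2 * (π : ℂ) * Complex.I * a), 0;
               0, Complex.exp (-(2 * (π : ℂ) * Complex.I * a))] →
      M_B = (Complex.sin (2 * (π : ℂ) * a))⁻¹ •
        !![Complex.sin ((π : ℂ) * (2 * a - m)) * Complex.exp (-(Complex.I * ν / 2)),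
             Complex.sin ((π : ℂ) * m);
           -Complex.sin ((π : ℂ) * m),
             Complex.sin ((π : ℂ) * (2 * a + m)) * Complex.exp (Complex.I * ν / 2)] →
      M_B.det = 1 ∧ (M_A⁻¹ * M_B⁻¹ * M_A * M_B).trace = 2 * Complex.cos (2 * (π : ℂ) * m) := by
  intro M_A M_B hA hB
  set S := Complex.sin (2 * (π : ℂ) * a) with hS
  set P := Complex.sin ((π : ℂ) * (2 * a - m)) with hP
  set Q := Complex.sin ((π : ℂ) * (2 * a + m)) with hQ
  set s := Complex.sin ((π : ℂ) * m) with hs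
  set F := Complex.exp (Complex.I * ν / 2) with hF
  set G := Complex.exp (-(Complex.I * ν / 2)) with hG
  set E := Complex.exp (2 * (π : ℂ) * Complex.I * a) with hE
  set E' := Complex.exp (-(2 * (π : ℂ) * Complex.I * a)) with hE'
  have hFG : G * F = 1 := by
    rw [hF, hG, ← Complex.exp_add]; simp
  have hEE : E * E' = 1 := by
    rw [hE, hE', ← Complex.exp_add]; simp
  -- key product formula
  have key : P * Q = S ^ 2 - s ^ 2 := by
    have h1 := Complex.sin_sq_add_cos_sq ((π : ℂ) * m)
    have h2 := Complex.sin_sq_add_cos_sq (2 * (π : ℂ) * a)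
    have e1 : (π : ℂ) * (2 * a - m) = 2 * (π : ℂ) * a - (π : ℂ) * m := by ring
    have e2 : (π : ℂ) * (2 * a + m) = 2 * (π : ℂ) * a + (π : ℂ) * m := by ring
    rw [hP, hQ, e1, e2, Complex.sin_sub, Complex.sin_add, hS, hs]
    linear_combination (Complex.sin (2 * (π : ℂ) * a)) ^ 2 * h1 -
      (Complex.sin ((π : ℂ) * m)) ^ 2 * h2
  -- relation between S and E, E'
  have hSE : 2 * Complex.I * S = E - E' := by
    have : S = (Complex.exp (-(2 * (π : ℂ) * a) * Complex.I) -
        Complex.exp ((2 * (π : ℂ) * a) * Complex.I)) * Complex.I / 2 := rfl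
    rw [this, hE, hE']
    have e1 : -(2 * (π : ℂ) * a) * Complex.I = -(2 * (π : ℂ) * Complex.I * a) := by ring
    have e2 : (2 * (π : ℂ) * a) * Complex.I = 2 * (π : ℂ) * Complex.I * a := by ring
    rw [e1, e2]
    have hI2 := Complex.I_sq
    linear_combination (Complex.exp (-(2 * (π : ℂ) * Complex.I * a)) -
      Complex.exp (2 * (π : ℂ) * Complex.I * a)) * hI2
  have hcos : Complex.cos (2 * (π : ℂ) * m) = 1 - 2 * s ^ 2 := by
    have e : 2 * (π : ℂ) * m = 2 * ((π : ℂ) * m) := by ring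
    rw [e, Complex.cos_two_mul, hs]
    linear_combination 2 * Complex.sin_sq_add_cos_sq ((π : ℂ) * m)
  have hdet : M_B.det = 1 := by
    rw [hB, Matrix.det_smul, Matrix.det_fin_two_of]
    simp only [Fintype.card_fin]
    field_simp
    linear_combination (P * Q) * hFG + key
  refine ⟨hdet, ?_⟩
  have hAinv : M_A⁻¹ = !![E', 0; 0, E] := by
    apply Matrix.inv_eq_right_inv
    rw [hA]
    rw [Matrix.mul_fin_two]
    ext i j
    fin_cases i <;> fin_cases j <;>
      simp [hEE, mul_comm E' E]
  have hBinv : M_B⁻¹ = S⁻¹ • !![Q * F, -s; s, P * G] := by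
    apply Matrix.inv_eq_right_inv
    rw [hB, Matrix.smul_mul, Matrix.mul_smul, smul_smul, Matrix.mul_fin_two]
    ext i j
    fin_cases i <;> fin_cases j
    all_goals simp [Matrix.smul_apply]
    all_goals try (right; ring)
    all_goals (field_simp; linear_combination (P * Q) * hFG + key)
  rw [hAinv, hBinv, hA, hB]
  simp only [Matrix.smul_mul, Matrix.mul_smul, smul_smul, Matrix.trace_smul,
    Matrix.mul_fin_two, Matrix.trace_fin_two_of, smul_eq_mul]
  rw [hcos]
  have h4 : E * E + E' * E' = 2 - 4 * S ^ 2 := by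
    linear_combination (-(E - E') - 2 * Complex.I * S) * hSE + 2 * hEE +
      (4 * S ^ 2) * Complex.I_sq
  field_simp
  linear_combination (2 * P * Q) * hFG + 2 * key + s ^ 2 * h4 +
    (2 * P * Q * G * F) * hEE
end

section
/- Let τ be in the complex upper half-plane, ν, ρ ∈ ℂ, and B : ℤ → ℂ, and suppose the family (n,k) ↦ e^{2πiνn} · e^{2πiτ(k+n/2)²} · e^{4πi(k+n/2)(ρ+1/2)} · B(n) is summable over ℤ². Then ∑_{(n,k)∈ℤ²} e^{2πiνn} e^{2πiτ(k+n/2)²} e^{4πi(k+n/2)(ρ+1/2)} B(n) = ( ∑_{j∈ℤ} e^{4πiνj} B(2j) ) · θ₃(2ρ|2τ) − ( ∑_{j∈ℤ} e^{2πiν(2j+1)} B(2j+1) ) · θ₂(2ρ|2τ). -/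
/-!
Write `n = 2j + r` with `r ∈ {0, 1}` and `k = m - j`, so that `k + n/2 = m + r/2`. Then
`e^{2πiτ(k+n/2)²} = e^{πi(2τ)(m+r/2)²}` and `e^{4πi(k+n/2)(ρ+1/2)} = (-1)^r e^{2πi(m+r/2)(2ρ)}`,
so for fixed `j` the sum over `m` is `θ₃(2ρ|2τ)` for `r = 0` and `-θ₂(2ρ|2τ)` for `r = 1`.
-/

open Complex Real

/-- Jacobi theta function θ₂(z|τ). -/
noncomputable def theta2 (τ z : ℂ) : ℂ :=
  ∑' n : ℤ, Complex.exp ((π : ℂ) * Complex.I * τ * ((n : ℂ) + 1 / 2) ^ 2) *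
    Complex.exp (2 * (π : ℂ) * Complex.I * ((n : ℂ) + 1 / 2) * z)

/-- Jacobi theta function θ₃(z|τ). -/
noncomputable def theta3 (τ z : ℂ) : ℂ :=
  ∑' n : ℤ, Complex.exp ((π : ℂ) * Complex.I * τ * (n : ℂ) ^ 2) *
    Complex.exp (2 * (π : ℂ) * Complex.I * (n : ℂ) * z)

def intProdParityShearEquiv : (ℤ × ℤ) ⊕ (ℤ × ℤ) ≃ ℤ × ℤ where
  toFun
    | .inl (j, m) => (2 * j, m - j)
    | .inr (j, m) => (2 * j + 1, m - j)
  invFun p := if Even p.1 then .inl (p.1 / 2, p.2 + p.1 / 2) else .inr (p.1 / 2, p.2 + p.1 / 2)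
  left_inv := by
    rintro (⟨j, m⟩ | ⟨j, m⟩)
    · simp
    · have hj : (2 * j + 1) / 2 = j := by omega
      simp [hj]
  right_inv := fun ⟨n, k⟩ => by
    obtain ⟨j, rfl | rfl⟩ := Int.even_or_odd' n
    · simp
    · have hj : (2 * j + 1) / 2 = j := by omega
      simp [hj, Int.odd_iff]

theorem tsum_int_prod_eq_tsum_even_add_tsum_odd {α : Type*} [AddCommGroup α] [UniformSpace α]
    [IsUniformAddGroup α] [CompleteSpace α] [T0Space α] {f : ℤ × ℤ → α} (hf : Summable f) :
    ∑' p, f p =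
      ∑' (j : ℤ) (m : ℤ), f (2 * j, m - j) + ∑' (j : ℤ) (m : ℤ), f (2 * j + 1, m - j) := by
  have hfe : Summable (f ∘ intProdParityShearEquiv) := intProdParityShearEquiv.summable_iff.2 hf
  have hl := hfe.comp_injective Sum.inl_injective
  have hr := hfe.comp_injective Sum.inr_injective
  rw [← intProdParityShearEquiv.tsum_eq, ← Function.comp_def (g := intProdParityShearEquiv),
    hl.tsum_sum hr]
  exact congr_arg₂ (· + ·) hl.tsum_prod hr.tsum_prod

noncomputable def dualPartitionTerm (τ ν ρ : ℂ) (B : ℤ → ℂ) (p : ℤ × ℤ) : ℂ :=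
  Complex.exp (2 * (π : ℂ) * Complex.I * ν * (p.1 : ℂ)) *
    Complex.exp (2 * (π : ℂ) * Complex.I * τ * ((p.2 : ℂ) + (p.1 : ℂ) / 2) ^ 2) *
    Complex.exp (4 * (π : ℂ) * Complex.I * ((p.2 : ℂ) + (p.1 : ℂ) / 2) * (ρ + 1 / 2)) *
    B p.1

theorem dualPartitionTerm_even (τ ν ρ : ℂ) (B : ℤ → ℂ) (j m : ℤ) :
    dualPartitionTerm τ ν ρ B (2 * j, m - j) =
      (cexp (4 * π * I * ν * j) * B (2 * j)) *
        (cexp (π * I * (2 * τ) * (m : ℂ) ^ 2) * cexp (2 * π * I * m * (2 * ρ))) := by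
  have hshift : ((m - j : ℤ) : ℂ) + ((2 * j : ℤ) : ℂ) / 2 = m := by push_cast; ring
  have hsign : cexp (4 * π * I * m * (ρ + 1 / 2)) = cexp (2 * π * I * m * (2 * ρ)) := by
    rw [show 4 * π * I * m * (ρ + 1 / 2) = 2 * π * I * m * (2 * ρ) + m * (2 * π * I) by ring,
      Complex.exp_add, exp_int_mul_two_pi_mul_I, mul_one]
  rw [dualPartitionTerm, hshift, hsign]
  push_cast
  ring_nf

theorem dualPartitionTerm_odd (τ ν ρ : ℂ) (B : ℤ → ℂ) (j m : ℤ) :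
    dualPartitionTerm τ ν ρ B (2 * j + 1, m - j) =
      -(cexp (2 * π * I * ν * (2 * j + 1)) * B (2 * j + 1)) *
        (cexp (π * I * (2 * τ) * ((m : ℂ) + 1 / 2) ^ 2) *
          cexp (2 * π * I * ((m : ℂ) + 1 / 2) * (2 * ρ))) := by
  have hshift : ((m - j : ℤ) : ℂ) + ((2 * j + 1 : ℤ) : ℂ) / 2 = m + 1 / 2 := by push_cast; ring
  have hsign : cexp (4 * π * I * (m + 1 / 2) * (ρ + 1 / 2)) =
      -cexp (2 * π * I * (m + 1 / 2) * (2 * ρ)) := by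
    rw [show 4 * π * I * (m + 1 / 2) * (ρ + 1 / 2) =
        2 * π * I * (m + 1 / 2) * (2 * ρ) + (m * (2 * π * I) + π * I) by ring,
      Complex.exp_add, Complex.exp_add, exp_int_mul_two_pi_mul_I, exp_pi_mul_I]
    ring
  rw [dualPartitionTerm, hshift, hsign]
  push_cast
  ring_nf

theorem dual_partition_splitting_general (τ : ℂ) (ν ρ : ℂ) (B : ℤ → ℂ)
    (hsum : Summable (fun p : ℤ × ℤ =>
      Complex.exp (2 * (π : ℂ) * Complex.I * ν * (p.1 : ℂ)) *
        Complex.exp (2 * (π : ℂ) * Complex.I * τ * ((p.2 : ℂ) + (p.1 : ℂ) / 2) ^ 2) *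
        Complex.exp (4 * (π : ℂ) * Complex.I * ((p.2 : ℂ) + (p.1 : ℂ) / 2) * (ρ + 1 / 2)) *
        B p.1)) :
    ∑' p : ℤ × ℤ,
        Complex.exp (2 * (π : ℂ) * Complex.I * ν * (p.1 : ℂ)) *
          Complex.exp (2 * (π : ℂ) * Complex.I * τ * ((p.2 : ℂ) + (p.1 : ℂ) / 2) ^ 2) *
          Complex.exp (4 * (π : ℂ) * Complex.I * ((p.2 : ℂ) + (p.1 : ℂ) / 2) * (ρ + 1 / 2)) *
          B p.1 =
      (∑' j : ℤ, Complex.exp (4 * (π : ℂ) * Complex.I * ν * (j : ℂ)) * B (2 * j)) *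
          theta3 (2 * τ) (2 * ρ) -
        (∑' j : ℤ, Complex.exp (2 * (π : ℂ) * Complex.I * ν * (2 * (j : ℂ) + 1)) *
            B (2 * j + 1)) * theta2 (2 * τ) (2 * ρ) := by
  have hsplit := tsum_int_prod_eq_tsum_even_add_tsum_odd (f := dualPartitionTerm τ ν ρ B) hsum
  simp only [dualPartitionTerm_even, dualPartitionTerm_odd, tsum_mul_left, tsum_mul_right, neg_mul,
    tsum_neg] at hsplit
  rw [theta3, theta2]
  exact hsplit.trans (sub_eq_add_neg _ _).symm

/-- Splitting of the discrete Fourier transform of conformal blocks into even and odd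
Fourier shifts:
∑_{n,k} e^{2πiνn} q^{(k+n/2)²} e^{4πi(k+n/2)(ρ+1/2)} B(n)
  = (∑_j e^{4πiνj} B(2j))·θ₃(2ρ|2τ) − (∑_j e^{2πiν(2j+1)} B(2j+1))·θ₂(2ρ|2τ). -/
theorem dual_partition_splitting (τ : ℂ) (hτ : 0 < τ.im) (ν ρ : ℂ) (B : ℤ → ℂ)
    (hsum : Summable (fun p : ℤ × ℤ =>
      Complex.exp (2 * (π : ℂ) * Complex.I * ν * (p.1 : ℂ)) *
        Complex.exp (2 * (π : ℂ) * Complex.I * τ * ((p.2 : ℂ) + (p.1 : ℂ) / 2) ^ 2) *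
        Complex.exp (4 * (π : ℂ) * Complex.I * ((p.2 : ℂ) + (p.1 : ℂ) / 2) * (ρ + 1 / 2)) *
        B p.1)) :
    ∑' p : ℤ × ℤ,
        Complex.exp (2 * (π : ℂ) * Complex.I * ν * (p.1 : ℂ)) *
          Complex.exp (2 * (π : ℂ) * Complex.I * τ * ((p.2 : ℂ) + (p.1 : ℂ) / 2) ^ 2) *
          Complex.exp (4 * (π : ℂ) * Complex.I * ((p.2 : ℂ) + (p.1 : ℂ) / 2) * (ρ + 1 / 2)) *
          B p.1 =
      (∑' j : ℤ, Complex.exp (4 * (π : ℂ) * Complex.I * ν * (j : ℂ)) * B (2 * j)) *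
          theta3 (2 * τ) (2 * ρ) -
        (∑' j : ℤ, Complex.exp (2 * (π : ℂ) * Complex.I * ν * (2 * (j : ℂ) + 1)) *
            B (2 * j + 1)) * theta2 (2 * τ) (2 * ρ) :=
  dual_partition_splitting_general τ ν ρ B hsum
end
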